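/- Solution of the second homological equation. Let n ≥ 1, N ≥ 1, and let ω ∈ ℝⁿ satisfy the non-resonance condition k·ω ≠ 0 for all k ∈ ℤⁿ with 0 < |k| ≤ N. Let f(p,q) = Σ_{j∈ℕⁿ,|j|=1} Σ_{0<|k|≤N} c_{j,k} p^j exp(i k·q) be a function linear in the actions with zero angular average and c_{j,−k} = conj(c_{j,k}). Then the function χ(p,q) = Σ_{|j|=1} Σ_{0<|k|≤N} c_{j,k} p^j exp(i k·q)/(i k·ω) is real-valued and solves the homological equation {ω·p, χ} + f = 0, where the Poisson bracket is {f,g} = Σ_{j=1}^n (∂f/∂qⱼ ∂g/∂pⱼ − ∂f/∂pⱼ ∂g/∂qⱼ). -/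

import Mathlib

/-!
Since `ω·p` does not depend on the angles, `{ω·p, g}` is minus the derivative of `g` along the
angle direction `(0, ω)`. On a mode `pⱼ e^{i k·q}` this derivative is multiplication by `i k·ω`,
which the non-resonance condition lets us invert mode by mode. The coefficients of `χ` inherit
`c_{j,-k} = conj c_{j,k}`, so reindexing `k ↦ -k` shows that `χ` equals its own conjugate.
-/

open Complex ComplexConjugate Finset

/-- The Poisson bracket `{f,g} = Σⱼ (∂f/∂qⱼ ∂g/∂pⱼ − ∂f/∂pⱼ ∂g/∂qⱼ)` for
complex-valued functions of the canonical coordinates `(p,q) ∈ ℝⁿ × ℝⁿ`. -/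
noncomputable def poissonBracketC (n : ℕ) (f g : (Fin n → ℝ) × (Fin n → ℝ) → ℂ)
    (x : (Fin n → ℝ) × (Fin n → ℝ)) : ℂ :=
  ∑ j, (fderiv ℝ f x (0, Pi.single j 1) * fderiv ℝ g x (Pi.single j 1, 0)
      - fderiv ℝ f x (Pi.single j 1, 0) * fderiv ℝ g x (0, Pi.single j 1))

theorem Set.finite_setOf_sum_abs_le {ι : Type*} [Fintype ι] (N : ℤ) :
    {k : ι → ℤ | ∑ i, |k i| ≤ N}.Finite := by
  refine (Set.Finite.pi fun _ => Set.finite_Icc (-N) N).subset fun k hk i _ => ?_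
  rw [Set.mem_Icc, ← abs_le]
  exact (single_le_sum (fun i _ => abs_nonneg (k i)) (Finset.mem_univ i)).trans hk

theorem Complex.im_finsum_eq_zero_of_conj_neg {G : Type*} [AddGroup G] (g : G → ℂ)
    (hg : ∀ k, g (-k) = conj (g k)) : (∑ᶠ k, g k).im = 0 := by
  rw [← conj_eq_iff_im]
  calc conj (∑ᶠ k, g k) = ∑ᶠ k, g (Equiv.neg G k) := by
        simp only [Equiv.neg_apply, hg]
        exact (starAddEquiv : ℂ ≃+ ℂ).map_finsum g
    _ = ∑ᶠ k, g k := finsum_comp_equiv (Equiv.neg G)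

section FourierTerms

variable {n : ℕ}

theorem poissonBracketC_linear_actions_left (ω : Fin n → ℝ)
    (g : (Fin n → ℝ) × (Fin n → ℝ) → ℂ) (x : (Fin n → ℝ) × (Fin n → ℝ)) :
    poissonBracketC n (fun y => ∑ i, (ω i : ℂ) * (y.1 i : ℂ)) g x = -fderiv ℝ g x (0, ω) := by
  let L : ((Fin n → ℝ) × (Fin n → ℝ)) →L[ℝ] ℂ :=
    ofRealCLM.comp (∑ i, ω i • (ContinuousLinearMap.proj i).comp (ContinuousLinearMap.fst ℝ _ _))
  have hL : (fun y : (Fin n → ℝ) × (Fin n → ℝ) => ∑ i, (ω i : ℂ) * (y.1 i : ℂ)) = L := by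
    ext y; simp [L]
  have hω : ((0 : Fin n → ℝ), ω) = ∑ m, ω m • ((0 : Fin n → ℝ), (Pi.single m 1 : Fin n → ℝ)) := by
    ext i; all_goals simp [Prod.fst_sum, Prod.snd_sum, Pi.single_apply]
  simp only [poissonBracketC, hL, L.fderiv, hω, map_sum, map_smul, Complex.real_smul]
  simp [L, Pi.single_apply, ← sum_neg_distrib]

noncomputable def actionFourierTerm (a : ℂ) (j : Fin n) (k : Fin n → ℤ)
    (x : (Fin n → ℝ) × (Fin n → ℝ)) : ℂ :=
  a * (x.1 j : ℂ) * cexp (I * ∑ i, (k i : ℂ) * x.2 i)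

@[simp]
theorem actionFourierTerm_zero (j : Fin n) (k : Fin n → ℤ) : actionFourierTerm 0 j k = 0 := by
  ext x; all_goals simp [actionFourierTerm]

theorem mul_actionFourierTerm (z a : ℂ) (j : Fin n) (k : Fin n → ℤ)
    (x : (Fin n → ℝ) × (Fin n → ℝ)) :
    z * actionFourierTerm a j k x = actionFourierTerm (z * a) j k x := by
  simp only [actionFourierTerm]; ring

theorem conj_actionFourierTerm (a : ℂ) (j : Fin n) (k : Fin n → ℤ)
    (x : (Fin n → ℝ) × (Fin n → ℝ)) :
    conj (actionFourierTerm a j k x) = actionFourierTerm (conj a) j (-k) x := by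
  simp [actionFourierTerm, ← exp_conj, map_sum]

theorem differentiable_actionFourierTerm (a : ℂ) (j : Fin n) (k : Fin n → ℤ) :
    Differentiable ℝ (actionFourierTerm a j k) := by
  unfold actionFourierTerm
  fun_prop

theorem actionFourierTerm_add_angles (a : ℂ) (j : Fin n) (k : Fin n → ℤ)
    (x : (Fin n → ℝ) × (Fin n → ℝ)) (v : Fin n → ℝ) :
    actionFourierTerm a j k (x + (0, v))
      = actionFourierTerm a j k x * cexp (I * ((∑ i, (k i : ℝ) * v i : ℝ) : ℂ)) := by
  simp only [actionFourierTerm, Prod.fst_add, Prod.snd_add, Pi.add_apply, Pi.zero_apply, add_zero,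
    ofReal_add, mul_add, sum_add_distrib, exp_add, ofReal_sum, ofReal_mul, ofReal_intCast]
  ring

theorem fderiv_actionFourierTerm_angles (a : ℂ) (j : Fin n) (k : Fin n → ℤ)
    (x : (Fin n → ℝ) × (Fin n → ℝ)) (v : Fin n → ℝ) :
    fderiv ℝ (actionFourierTerm a j k) x (0, v)
      = I * ((∑ i, (k i : ℝ) * v i : ℝ) : ℂ) * actionFourierTerm a j k x := by
  set s : ℂ := I * ((∑ i, (k i : ℝ) * v i : ℝ) : ℂ)
  have hline : HasLineDerivAt ℝ (actionFourierTerm a j k) (s * actionFourierTerm a j k x) x (0, v) := by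
    have h := ((hasDerivAt_id (0 : ℝ)).ofReal_comp.mul_const s).cexp.const_mul
      (actionFourierTerm a j k x)
    simp only [id, ofReal_zero, ofReal_one, zero_mul, exp_zero, one_mul] at h
    rw [mul_comm] at h
    refine h.congr_of_eventuallyEq (.of_forall fun t => ?_)
    simp only [Prod.smul_mk, smul_zero, actionFourierTerm_add_angles]
    simp [s, mul_sum, mul_left_comm]
  rw [← (differentiable_actionFourierTerm a j k x).lineDeriv_eq_fderiv, hline.lineDeriv]

theorem poissonBracketC_sum_actionFourierTerm (ω : Fin n → ℝ) (a : Fin n → (Fin n → ℤ) → ℂ)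
    (K : Finset (Fin n → ℤ)) (x : (Fin n → ℝ) × (Fin n → ℝ)) :
    poissonBracketC n (fun y => ∑ i, (ω i : ℂ) * (y.1 i : ℂ))
        (fun y => ∑ j, ∑ k ∈ K, actionFourierTerm (a j k) j k y) x
      = -∑ j, ∑ k ∈ K, actionFourierTerm (I * ((∑ i, (k i : ℝ) * ω i : ℝ) : ℂ) * a j k) j k x := by
  have h := HasFDerivAt.fun_sum (u := univ) fun j _ => HasFDerivAt.fun_sum (u := K) fun k _ =>
    (differentiable_actionFourierTerm (a j k) j k x).hasFDerivAt
  rw [poissonBracketC_linear_actions_left, h.fderiv]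
  simp only [_root_.sum_apply, fderiv_actionFourierTerm_angles, mul_actionFourierTerm]

theorem poissonBracketC_finsum_actionFourierTerm (ω : Fin n → ℝ)
    (a : Fin n → (Fin n → ℤ) → ℂ) (ha : ∀ j, (Function.support (a j)).Finite)
    (x : (Fin n → ℝ) × (Fin n → ℝ)) :
    poissonBracketC n (fun y => ∑ i, (ω i : ℂ) * (y.1 i : ℂ))
        (fun y => ∑ j, ∑ᶠ k, actionFourierTerm (a j k) j k y) x
      = -∑ j, ∑ᶠ k, actionFourierTerm (I * ((∑ i, (k i : ℝ) * ω i : ℝ) : ℂ) * a j k) j k x := by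
  obtain ⟨K, hK⟩ := (Set.finite_iUnion ha).exists_finset
  have hfinsum_eq_sum : ∀ (b : (Fin n → ℤ) → ℂ) (j : Fin n) (y : (Fin n → ℝ) × (Fin n → ℝ)),
      (∀ k, a j k = 0 → b k = 0) →
      ∑ᶠ k, actionFourierTerm (b k) j k y = ∑ k ∈ K, actionFourierTerm (b k) j k y := by
    intro b j y hb
    refine finsum_eq_sum_of_support_subset _ fun k hk => (hK k).2 (Set.mem_iUnion.2 ⟨j, ?_⟩)
    intro hak
    simp [hb k hak] at hk
  rw [show (fun y => ∑ j, ∑ᶠ k, actionFourierTerm (a j k) j k y)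
      = fun y => ∑ j, ∑ k ∈ K, actionFourierTerm (a j k) j k y from
    funext fun y => sum_congr rfl fun j _ => hfinsum_eq_sum _ j y fun _ h => h,
    poissonBracketC_sum_actionFourierTerm]
  exact congrArg Neg.neg (sum_congr rfl fun j _ => (hfinsum_eq_sum _ j x fun _ h => by simp [h]).symm)

noncomputable def homologicalCoeff (ω : Fin n → ℝ) (c : (Fin n → ℤ) → ℂ) (k : Fin n → ℤ) : ℂ :=
  if k ≠ 0 then c k / (I * ((∑ i, (k i : ℝ) * ω i : ℝ) : ℂ)) else 0

variable {ω : Fin n → ℝ} {c : (Fin n → ℤ) → ℂ}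

theorem support_homologicalCoeff_subset :
    Function.support (homologicalCoeff ω c) ⊆ Function.support c := by
  intro k hk hck
  simp [homologicalCoeff, hck] at hk

theorem homologicalCoeff_neg (hc : ∀ k, c (-k) = conj (c k)) (k : Fin n → ℤ) :
    homologicalCoeff ω c (-k) = conj (homologicalCoeff ω c k) := by
  by_cases hk : k = 0
  · simp [homologicalCoeff, hk]
  · simp [homologicalCoeff, hk, hc, sum_neg_distrib]

theorem mul_homologicalCoeff {k : Fin n → ℤ}
    (hc : c k ≠ 0 → k ≠ 0 ∧ ∑ i, (k i : ℝ) * ω i ≠ 0) :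
    I * ((∑ i, (k i : ℝ) * ω i : ℝ) : ℂ) * homologicalCoeff ω c k = c k := by
  by_cases hck : c k = 0
  · simp [homologicalCoeff, hck]
  · obtain ⟨hk, hkω⟩ := hc hck
    have hden : I * ((∑ i, (k i : ℝ) * ω i : ℝ) : ℂ) ≠ 0 :=
      mul_ne_zero I_ne_zero (ofReal_ne_zero.2 hkω)
    rw [homologicalCoeff, if_pos hk]
    exact mul_div_cancel₀ _ hden

theorem actionFourierTerm_homologicalCoeff (j : Fin n) (k : Fin n → ℤ)
    (x : (Fin n → ℝ) × (Fin n → ℝ)) :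
    actionFourierTerm (homologicalCoeff ω c k) j k x =
      if k ≠ 0 then
        c k * (x.1 j : ℂ) * cexp (I * ∑ i, (k i : ℂ) * x.2 i) /
          (I * ((∑ i, (k i : ℝ) * ω i : ℝ) : ℂ))
      else 0 := by
  unfold actionFourierTerm homologicalCoeff
  split_ifs <;> ring

end FourierTerms

theorem second_homological_equation_general (n N : ℕ)
    (ω : Fin n → ℝ)
    (hres : ∀ k : Fin n → ℤ, k ≠ 0 → (∑ i, |k i|) ≤ (N : ℤ) →
      (∑ i, (k i : ℝ) * ω i) ≠ 0)
    (c : Fin n → (Fin n → ℤ) → ℂ)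
    (hsupp : ∀ j k, c j k ≠ 0 → k ≠ 0 ∧ (∑ i, |k i|) ≤ (N : ℤ))
    (hreal : ∀ j k, c j (-k) = starRingEnd ℂ (c j k))
    (f χ : (Fin n → ℝ) × (Fin n → ℝ) → ℂ)
    (hf : ∀ x : (Fin n → ℝ) × (Fin n → ℝ),
      f x = ∑ j, ∑ᶠ k : Fin n → ℤ,
        c j k * (x.1 j : ℂ) * Complex.exp (Complex.I * ∑ i, (k i : ℂ) * (x.2 i)))
    (hχ : ∀ x : (Fin n → ℝ) × (Fin n → ℝ),
      χ x = ∑ j, ∑ᶠ k : Fin n → ℤ,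
        if k ≠ 0 then
          c j k * (x.1 j : ℂ) * Complex.exp (Complex.I * ∑ i, (k i : ℂ) * (x.2 i)) /
            (Complex.I * ((∑ i, (k i : ℝ) * ω i : ℝ) : ℂ))
        else 0) :
    (∀ x : (Fin n → ℝ) × (Fin n → ℝ), (χ x).im = 0) ∧
    (∀ x : (Fin n → ℝ) × (Fin n → ℝ),
      poissonBracketC n (fun y => ∑ i, (ω i : ℂ) * (y.1 i : ℂ)) χ x + f x = 0) := by
  have hχ_modes : χ = fun y => ∑ j, ∑ᶠ k, actionFourierTerm (homologicalCoeff ω (c j) k) j k y :=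
    funext fun y => by simp only [hχ, actionFourierTerm_homologicalCoeff]
  have hfin : ∀ j, (Function.support (homologicalCoeff ω (c j))).Finite := fun j =>
    (Set.finite_setOf_sum_abs_le (N : ℤ)).subset
      fun k hk => (hsupp j k (support_homologicalCoeff_subset hk)).2
  refine ⟨fun x => ?_, fun x => ?_⟩
  · rw [hχ_modes, im_sum]
    refine sum_eq_zero fun j _ => im_finsum_eq_zero_of_conj_neg _ fun k => ?_
    rw [conj_actionFourierTerm, homologicalCoeff_neg (hreal j)]
  · rw [hχ_modes, poissonBracketC_finsum_actionFourierTerm ω _ hfin, hf x, neg_add_eq_zero]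
    refine sum_congr rfl fun j _ => finsum_congr fun k => congrArg (actionFourierTerm · j k x) ?_
    exact mul_homologicalCoeff fun hc =>
      let ⟨hk, hkN⟩ := hsupp j k hc
      ⟨hk, hres k hk hkN⟩

/-- Solution of the second homological equation.  Under the
non-resonance condition `k·ω ≠ 0` for `0 < |k| ≤ N`, given
`f(p,q) = Σ_{|j|=1} Σ_{0<|k|≤N} c_{j,k} p^j e^{i k·q}` (linear in the actions,
zero angular average, `c_{j,−k} = conj c_{j,k}`), the function
`χ(p,q) = Σ_{|j|=1} Σ_{0<|k|≤N} c_{j,k} p^j e^{i k·q}/(i k·ω)` is real-valued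
and solves `{ω·p, χ} + f = 0`. -/
theorem second_homological_equation (n N : ℕ) (hn : 1 ≤ n) (hN : 1 ≤ N)
    (ω : Fin n → ℝ)
    (hres : ∀ k : Fin n → ℤ, k ≠ 0 → (∑ i, |k i|) ≤ (N : ℤ) →
      (∑ i, (k i : ℝ) * ω i) ≠ 0)
    (c : Fin n → (Fin n → ℤ) → ℂ)
    (hsupp : ∀ j k, c j k ≠ 0 → k ≠ 0 ∧ (∑ i, |k i|) ≤ (N : ℤ))
    (hreal : ∀ j k, c j (-k) = starRingEnd ℂ (c j k))
    (f χ : (Fin n → ℝ) × (Fin n → ℝ) → ℂ)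
    (hf : ∀ x : (Fin n → ℝ) × (Fin n → ℝ),
      f x = ∑ j, ∑ᶠ k : Fin n → ℤ,
        c j k * (x.1 j : ℂ) * Complex.exp (Complex.I * ∑ i, (k i : ℂ) * (x.2 i)))
    (hχ : ∀ x : (Fin n → ℝ) × (Fin n → ℝ),
      χ x = ∑ j, ∑ᶠ k : Fin n → ℤ,
        if k ≠ 0 then
          c j k * (x.1 j : ℂ) * Complex.exp (Complex.I * ∑ i, (k i : ℂ) * (x.2 i)) /
            (Complex.I * ((∑ i, (k i : ℝ) * ω i : ℝ) : ℂ))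
        else 0) :
    (∀ x : (Fin n → ℝ) × (Fin n → ℝ), (χ x).im = 0) ∧
    (∀ x : (Fin n → ℝ) × (Fin n → ℝ),
      poissonBracketC n (fun y => ∑ i, (ω i : ℂ) * (y.1 i : ℂ)) χ x + f x = 0) :=
  second_homological_equation_general n N ω hres c hsupp hreal f χ hf hχ
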